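/- (Porter–Votaw characterization) Let n ≥ 1 and let X be an S(n)-space. The following are equivalent: (1) ad_{θ^n}(F) ≠ ∅ for every open filter F on X; (2) ad(G) ≠ ∅ for every open S(n)-filter G on X; (3) for every S(n−1)-cover {U_α} of X there exist finitely many indices α_1,...,α_k with X = closure(U_{α_1}) ∪ ... ∪ closure(U_{α_k}); (4) X is S(n)-closed. -/

import Mathlib

open Set Topology Filter Cardinal

universe u

variable {X : Type u}

/-- `U` is an `n`-hull of `x`: there are open neighborhoods `U₁, …, Uₙ = U` of `x`
with `closure Uᵢ ⊆ Uᵢ₊₁` for `i = 1, …, n-1`. -/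
def IsNHull [TopologicalSpace X] (n : ℕ) (x : X) (U : Set X) : Prop :=
  ∃ Us : ℕ → Set X, (∀ i < n, IsOpen (Us i) ∧ x ∈ Us i) ∧
    (∀ i, i + 1 < n → closure (Us i) ⊆ Us (i + 1)) ∧ Us (n - 1) = U

/-- The `θⁿ`-closure of a set: `cl_{θ⁰} M = closure M`, and for `n ≥ 1`,
`x ∉ cl_{θⁿ} M` iff there is an `n`-hull `U` of `x` with `closure U ∩ M = ∅`. -/
def thetaCl [TopologicalSpace X] : ℕ → Set X → Set X
  | 0, M => closure M
  | (n + 1), M => {x | ∀ U : Set X, IsNHull (n + 1) x U → (closure U ∩ M).Nonempty}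

/-- The `θⁿ`-interior. -/
def thetaInt [TopologicalSpace X] (n : ℕ) (M : Set X) : Set X := (thetaCl n Mᶜ)ᶜ

/-- An `S(n)`-space: any two distinct points are `S(n)`-separated. -/
def IsSnSpace (n : ℕ) (X : Type u) [TopologicalSpace X] : Prop :=
  ∀ x y : X, x ≠ y → x ∉ thetaCl n {y}

/-- A set is `θ`-closed if it coincides with its `θ`-closure. -/
def IsThetaClosed [TopologicalSpace X] (M : Set X) : Prop := thetaCl 1 M = M

/-- An `S(n)`-closed space: its image is closed under every embedding into an `S(n)`-space. -/
def IsSnClosedSpace (n : ℕ) (X : Type u) [TopologicalSpace X] : Prop :=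
  ∀ (Z : Type u) [TopologicalSpace Z], IsSnSpace n Z →
    ∀ e : X → Z, Topology.IsEmbedding e → IsClosed (Set.range e)

/-- An `S(n)`-θ-closed space: its image is θ-closed under every embedding into an
`S(n)`-space. -/
def IsSnThetaClosedSpace (n : ℕ) (X : Type u) [TopologicalSpace X] : Prop :=
  ∀ (Z : Type u) [TopologicalSpace Z], IsSnSpace n Z →
    ∀ e : X → Z, Topology.IsEmbedding e → IsThetaClosed (Set.range e)

/-- A `θ⁰(n)`-complete accumulation point of `F`: `|F ∩ U| = |F|` for every `n`-hull `U`. -/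
def IsThetaZeroCompleteAccPt [TopologicalSpace X] (n : ℕ) (F : Set X) (x : X) : Prop :=
  ∀ U : Set X, IsNHull n x U → #(↥(F ∩ U)) = #(↥F)

/-- A `θ(n)`-complete accumulation point of `F`: `|F ∩ closure U| = |F|` for every
`n`-hull `U`. -/
def IsThetaCompleteAccPt [TopologicalSpace X] (n : ℕ) (F : Set X) (x : X) : Prop :=
  ∀ U : Set X, IsNHull n x U → #(↥(F ∩ closure U)) = #(↥F)

/-- Weakly `S(n)`-θ-closed: every infinite subset of regular cardinality has a
`θ⁰(n)`-complete accumulation point. -/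
def WeaklySnThetaClosed (n : ℕ) (X : Type u) [TopologicalSpace X] : Prop :=
  ∀ F : Set X, F.Infinite → (#(↥F)).IsRegular → ∃ x : X, IsThetaZeroCompleteAccPt n F x

/-- Weakly `S(n)`-closed: every infinite subset of regular cardinality has a
`θ(n)`-complete accumulation point. -/
def WeaklySnClosed (n : ℕ) (X : Type u) [TopologicalSpace X] : Prop :=
  ∀ F : Set X, F.Infinite → (#(↥F)).IsRegular → ∃ x : X, IsThetaCompleteAccPt n F x

/-- A (proper) open filter: a filter with a base of open sets. -/
def IsOpenFilter [TopologicalSpace X] (F : Filter X) : Prop :=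
  F.NeBot ∧ ∀ s ∈ F, ∃ U ∈ F, IsOpen U ∧ U ⊆ s

/-- A (proper) closed filter: a filter with a base of closed sets. -/
def IsClosedFilter [TopologicalSpace X] (F : Filter X) : Prop :=
  F.NeBot ∧ ∀ s ∈ F, ∃ C ∈ F, IsClosed C ∧ C ⊆ s

/-- `ad_{θⁿ} F`, the set of `θⁿ`-adherent points of a filter. -/
def adTheta [TopologicalSpace X] (n : ℕ) (F : Filter X) : Set X :=
  ⋂ s ∈ F, thetaCl n s

/-- An `S(n)`-filter: every point not adherent to `F` is `S(n)`-separated from some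
element of `F`. -/
def IsSnFilter [TopologicalSpace X] (n : ℕ) (F : Filter X) : Prop :=
  ∀ x : X, x ∉ adTheta 0 F → ∃ s ∈ F, x ∉ thetaCl n s

/-- An `S(n)`-cover: an open cover such that every point lies in the `θⁿ`-interior of
some member. -/
def IsSnCover [TopologicalSpace X] (n : ℕ) (C : Set (Set X)) : Prop :=
  (∀ U ∈ C, IsOpen U) ∧ ⋃₀ C = Set.univ ∧ ∀ x : X, ∃ U ∈ C, x ∈ thetaInt n U

/-- Linearly Lindelöf: every uncountable subset of regular cardinality has a complete
accumulation point. -/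
def LinearlyLindelof (X : Type u) [TopologicalSpace X] : Prop :=
  ∀ F : Set X, ¬F.Countable → (#(↥F)).IsRegular →
    ∃ x : X, ∀ U : Set X, IsOpen U → x ∈ U → #(↥(F ∩ U)) = #(↥F)


section PVAux

variable {X : Type u} [TopologicalSpace X]

lemma not_mem_thetaCl_succ {n : ℕ} {x : X} {M : Set X} :
    x ∉ thetaCl (n + 1) M ↔ ∃ U, IsNHull (n + 1) x U ∧ closure U ∩ M = ∅ := by
  simp only [thetaCl, mem_setOf_eq]
  push_neg
  simp only [Set.not_nonempty_iff_eq_empty]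

lemma closure_subset_thetaCl (n : ℕ) (M : Set X) : closure M ⊆ thetaCl n M := by
  cases n with
  | zero => exact subset_rfl
  | succ m =>
    intro x hx
    simp only [thetaCl, mem_setOf_eq]
    rintro U ⟨Us, h1, _, h3⟩
    have hU : IsOpen U ∧ x ∈ U := h3 ▸ h1 m (by omega)
    obtain ⟨y, hy1, hy2⟩ := mem_closure_iff.mp hx U hU.1 hU.2
    exact ⟨y, subset_closure hy1, hy2⟩

lemma chain_mono {n : ℕ} {Us : ℕ → Set X}
    (h2 : ∀ i, i + 1 < n → closure (Us i) ⊆ Us (i + 1)) {i j : ℕ}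
    (hij : i ≤ j) (hj : j < n) : Us i ⊆ Us j := by
  obtain ⟨k, rfl⟩ := Nat.exists_eq_add_of_le hij
  clear hij
  induction k with
  | zero => exact subset_rfl
  | succ l ih =>
    calc Us i ⊆ Us (i + l) := ih (by omega)
    _ ⊆ closure (Us (i + l)) := subset_closure
    _ ⊆ Us (i + l + 1) := h2 _ (by omega)

/-- Build an `(m+1)`-hull ending exactly at `U` from `x ∈ thetaInt m U`. -/
lemma hull_of_thetaInt {m : ℕ} {x : X} {U : Set X} (hU : IsOpen U) (h : x ∈ thetaInt m U) :
    ∃ Us : ℕ → Set X, (∀ i < m + 1, IsOpen (Us i) ∧ x ∈ Us i) ∧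
      (∀ i, i + 1 < m + 1 → closure (Us i) ⊆ Us (i + 1)) ∧ Us m = U := by
  cases m with
  | zero =>
    have hx : x ∈ U := by
      have : x ∉ closure Uᶜ := h
      exact not_not.mp fun hxU => this (subset_closure hxU)
    exact ⟨fun _ => U, fun i _ => ⟨hU, hx⟩, fun i hi => by omega, rfl⟩
  | succ k =>
    have h' : x ∉ thetaCl (k + 1) Uᶜ := h
    obtain ⟨V, ⟨Vs, hv1, hv2, hv3⟩, hVU⟩ := not_mem_thetaCl_succ.mp h'
    have hv3' : Vs k = V := hv3
    have hclV : closure V ⊆ U := by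
      intro y hy
      by_contra hyU
      exact (eq_empty_iff_forall_notMem.mp hVU y) ⟨hy, hyU⟩
    refine ⟨fun i => if i < k + 1 then Vs i else U, ?_, ?_, ?_⟩
    · intro i hi
      by_cases hik : i < k + 1
      · simpa [hik] using hv1 i hik
      · have hxU : x ∈ U := hclV (subset_closure (hv3' ▸ (hv1 k (by omega)).2))
        simp only [if_neg hik]
        exact ⟨hU, hxU⟩
    · intro i hi
      by_cases hik : i + 1 < k + 1
      · have h'' : i < k + 1 := by omega
        simp only [if_pos hik, if_pos h'']
        exact hv2 i hik
      · simp only [if_neg hik, if_pos (show i < k + 1 by omega)]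
        rw [show i = k from by omega, hv3']
        exact hclV
    · simp

/-- Conversely, a hull chain ending at `U` witnesses `x ∈ thetaInt m U`. -/
lemma thetaInt_of_hull {m : ℕ} {x : X} {U : Set X} (Us : ℕ → Set X)
    (h1 : ∀ i < m + 1, IsOpen (Us i) ∧ x ∈ Us i)
    (h2 : ∀ i, i + 1 < m + 1 → closure (Us i) ⊆ Us (i + 1)) (h3 : Us m = U) :
    x ∈ thetaInt m U := by
  cases m with
  | zero =>
    have hU : IsOpen U ∧ x ∈ U := h3 ▸ h1 0 (by omega)
    have : x ∉ closure Uᶜ := by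
      rw [hU.1.isClosed_compl.closure_eq]
      simpa using hU.2
    exact this
  | succ k =>
    show x ∉ thetaCl (k + 1) Uᶜ
    rw [not_mem_thetaCl_succ]
    refine ⟨Us k, ⟨Us, fun i hi => h1 i (by omega), fun i hi => h2 i (by omega), rfl⟩, ?_⟩
    have : closure (Us k) ⊆ U := h3 ▸ h2 k (by omega)
    rw [eq_empty_iff_forall_notMem]
    rintro y ⟨hy1, hy2⟩
    exact hy2 (this hy1)

/-- The one-point extension topology determined by a filter. -/
def extTop (F : Filter X) : TopologicalSpace (Option X) where
  IsOpen A := IsOpen (some ⁻¹' A) ∧ (none ∈ A → ∃ s ∈ F, IsOpen s ∧ ∀ x ∈ s, some x ∈ A)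
  isOpen_univ := ⟨isOpen_univ, fun _ => ⟨univ, univ_mem, isOpen_univ, fun _ _ => trivial⟩⟩
  isOpen_inter A B hA hB := by
    refine ⟨hA.1.inter hB.1, fun h => ?_⟩
    obtain ⟨s, hs, hso, hsA⟩ := hA.2 h.1
    obtain ⟨t, ht, hto, htB⟩ := hB.2 h.2
    exact ⟨s ∩ t, inter_mem hs ht, hso.inter hto, fun x hx => ⟨hsA x hx.1, htB x hx.2⟩⟩
  isOpen_sUnion S hS := by
    constructor
    · rw [preimage_sUnion]
      exact isOpen_biUnion fun A hA => (hS A hA).1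
    · rintro ⟨A, hAS, hnA⟩
      obtain ⟨s, hs, hso, hsA⟩ := (hS A hAS).2 hnA
      exact ⟨s, hs, hso, fun x hx => ⟨A, hAS, hsA x hx⟩⟩

/-- The key construction for `(4) → (1)`. -/
lemma adTheta_nonempty_of_isSnClosed {m : ℕ} (hX : IsSnSpace (m + 1) X)
    (h4 : IsSnClosedSpace (m + 1) X) (F : Filter X) (hF : IsOpenFilter F) :
    (adTheta (m + 1) F).Nonempty := by
  by_contra hemp
  rw [Set.not_nonempty_iff_eq_empty] at hemp
  haveI hFne : F.NeBot := hF.1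
  have key : ∀ x : X, ∃ s ∈ F, ∃ Ws : ℕ → Set X,
      (∀ i < m + 1, IsOpen (Ws i) ∧ x ∈ Ws i) ∧
      (∀ i, i + 1 < m + 1 → closure (Ws i) ⊆ Ws (i + 1)) ∧ closure (Ws m) ∩ s = ∅ := by
    intro x
    have hx : x ∉ adTheta (m + 1) F := by rw [hemp]; exact notMem_empty x
    simp only [adTheta, mem_iInter, not_forall] at hx
    obtain ⟨s, hs, hxs⟩ := hx
    obtain ⟨U, ⟨Ws, h1, h2, h3⟩, hcl⟩ := not_mem_thetaCl_succ.mp hxs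
    have h3' : Ws m = U := h3
    exact ⟨s, hs, Ws, h1, h2, by rwa [h3']⟩
  letI tZ : TopologicalSpace (Option X) := extTop F
  have isOpen_iff : ∀ A : Set (Option X),
      IsOpen A ↔ IsOpen (some ⁻¹' A) ∧ (none ∈ A → ∃ s ∈ F, IsOpen s ∧ ∀ x ∈ s, some x ∈ A) :=
    fun A => Iff.rfl
  have preim_image : ∀ B : Set X, (some ⁻¹' (some '' B) : Set X) = B :=
    fun B => preimage_image_eq B (Option.some_injective X)
  have image_open : ∀ B : Set X, IsOpen B → IsOpen (some '' B : Set (Option X)) := by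
    intro B hB
    rw [isOpen_iff]
    refine ⟨by rwa [preim_image], fun h => ?_⟩
    simp at h
  have hemb : Topology.IsEmbedding (some : X → Option X) := by
    refine ⟨⟨?_⟩, Option.some_injective X⟩
    apply TopologicalSpace.ext
    ext B
    rw [isOpen_induced_iff]
    constructor
    · intro hB
      exact ⟨some '' B, image_open B hB, preim_image B⟩
    · rintro ⟨A, hA, rfl⟩
      exact ((isOpen_iff A).mp hA).1
  have mem_closure_image : ∀ (B : Set X) (x : X),
      some x ∈ closure (some '' B : Set (Option X)) ↔ x ∈ closure B := by
    intro B x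
    rw [hemb.closure_eq_preimage_closure_image B]
    exact Iff.rfl
  have none_not_closure : ∀ (B : Set X) (s : Set X), s ∈ F → s ∩ B = ∅ →
      none ∉ closure (some '' B : Set (Option X)) := by
    intro B s hs hsB hmem
    obtain ⟨s', hs'F, hs'o, hs's⟩ := hF.2 s hs
    have hO : IsOpen (insert none (some '' s') : Set (Option X)) := by
      rw [isOpen_iff]
      constructor
      · have : (some ⁻¹' (insert none (some '' s')) : Set X) = s' := by
          ext y; simp [Option.some_injective X |>.eq_iff]
        rwa [this]
      · exact fun _ => ⟨s', hs'F, hs'o, fun x hx => Or.inr ⟨x, hx, rfl⟩⟩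
    obtain ⟨z, hz1, hz2⟩ := mem_closure_iff.mp hmem _ hO (mem_insert _ _)
    obtain ⟨y, hyB, rfl⟩ := hz2
    rcases hz1 with h | h
    · exact nomatch h
    · obtain ⟨y', hy', he⟩ := h
      have hyy : y' = y := Option.some_injective X he
      rw [hyy] at hy'
      exact eq_empty_iff_forall_notMem.mp hsB y ⟨hs's hy', hyB⟩
  have closure_image_subset : ∀ B : Set X,
      closure (some '' B : Set (Option X)) ⊆ insert none (some '' closure B) := by
    intro B z hz
    cases z with
    | none => exact mem_insert _ _
    | some x => exact Or.inr ⟨x, (mem_closure_image B x).mp hz, rfl⟩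
  have closure_none : closure ({none} : Set (Option X)) = {none} := by
    apply Subset.antisymm _ subset_closure
    intro z hz
    cases z with
    | none => exact rfl
    | some x =>
      exfalso
      obtain ⟨w, hw1, hw2⟩ := mem_closure_iff.mp hz (some '' univ)
        (image_open univ isOpen_univ) ⟨x, trivial, rfl⟩
      rw [mem_singleton_iff] at hw2
      obtain ⟨y, _, rfl⟩ := hw1
      exact nomatch hw2
  have closure_insert_none : ∀ T : Set (Option X),
      closure (insert none T) ⊆ insert none (closure T) := by
    intro T
    rw [insert_eq, insert_eq, closure_union, closure_none]
  -- transfer of hulls from X to the extension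
  have transfer : ∀ (x : X) (Ws : ℕ → Set X) (s : Set X), s ∈ F →
      (∀ i < m + 1, IsOpen (Ws i) ∧ x ∈ Ws i) →
      (∀ i, i + 1 < m + 1 → closure (Ws i) ⊆ Ws (i + 1)) →
      closure (Ws m) ∩ s = ∅ →
      IsNHull (m + 1) (some x) (some '' Ws m : Set (Option X)) ∧
        closure (some '' Ws m : Set (Option X)) ⊆ some '' closure (Ws m) := by
    intro x Ws s hs h1 h2 hdisj
    have hsub : ∀ i < m + 1, Ws i ⊆ Ws m := fun i hi => chain_mono h2 (by omega) (by omega)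
    have hdisji : ∀ i < m + 1, s ∩ Ws i = ∅ := by
      intro i hi
      rw [eq_empty_iff_forall_notMem]
      rintro y ⟨hy1, hy2⟩
      exact eq_empty_iff_forall_notMem.mp hdisj y ⟨subset_closure (hsub i hi hy2), hy1⟩
    have hclo : ∀ i < m + 1, closure (some '' Ws i : Set (Option X)) ⊆ some '' closure (Ws i) := by
      intro i hi z hz
      rcases closure_image_subset (Ws i) hz with h | h
      · exact absurd (h ▸ hz) (none_not_closure (Ws i) s hs (hdisji i hi))
      · exact h
    refine ⟨⟨fun i => some '' Ws i, ?_, ?_, rfl⟩, hclo m (by omega)⟩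
    · intro i hi
      exact ⟨image_open _ (h1 i hi).1, ⟨x, (h1 i hi).2, rfl⟩⟩
    · intro i hi
      exact (hclo i (by omega)).trans (image_mono (h2 i hi))
  -- the extension is an S(n)-space
  have hSnZ : IsSnSpace (m + 1) (Option X) := by
    rintro z₁ z₂ hne
    rw [not_mem_thetaCl_succ]
    match z₁, z₂ with
    | some x, some y =>
      have hxy : x ≠ y := fun h => hne (by rw [h])
      obtain ⟨V, ⟨Vs, hv1, hv2, hv3⟩, hVy⟩ := not_mem_thetaCl_succ.mp (hX x y hxy)
      have hv3' : Vs m = V := hv3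
      obtain ⟨s, hs, Ws, hw1, hw2, hwdisj⟩ := key x
      set Ts : ℕ → Set X := fun i => Ws i ∩ Vs i with hTs
      have ht1 : ∀ i < m + 1, IsOpen (Ts i) ∧ x ∈ Ts i := fun i hi =>
        ⟨(hw1 i hi).1.inter (hv1 i hi).1, ⟨(hw1 i hi).2, (hv1 i hi).2⟩⟩
      have ht2 : ∀ i, i + 1 < m + 1 → closure (Ts i) ⊆ Ts (i + 1) := by
        intro i hi
        refine subset_inter ?_ ?_
        · exact (closure_mono inter_subset_left).trans (hw2 i hi)
        · exact (closure_mono inter_subset_right).trans (hv2 i hi)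
      have htdisj : closure (Ts m) ∩ s = ∅ := by
        rw [eq_empty_iff_forall_notMem]
        rintro y' ⟨hy1, hy2⟩
        exact eq_empty_iff_forall_notMem.mp hwdisj y'
          ⟨closure_mono inter_subset_left hy1, hy2⟩
      obtain ⟨hhull, hclsub⟩ := transfer x Ts s hs ht1 ht2 htdisj
      refine ⟨some '' Ts m, hhull, ?_⟩
      rw [eq_empty_iff_forall_notMem]
      rintro z ⟨hz1, hz2⟩
      rw [mem_singleton_iff] at hz2
      subst hz2
      obtain ⟨y', hy', he⟩ := hclsub hz1
      have hyy : y' = y := Option.some_injective X he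
      rw [hyy] at hy'
      have : y ∈ closure V := hv3' ▸ closure_mono inter_subset_right hy'
      exact eq_empty_iff_forall_notMem.mp hVy y ⟨this, rfl⟩
    | some x, none =>
      obtain ⟨s, hs, Ws, hw1, hw2, hwdisj⟩ := key x
      obtain ⟨hhull, hclsub⟩ := transfer x Ws s hs hw1 hw2 hwdisj
      refine ⟨some '' Ws m, hhull, ?_⟩
      rw [eq_empty_iff_forall_notMem]
      rintro z ⟨hz1, hz2⟩
      rw [mem_singleton_iff] at hz2
      subst hz2
      obtain ⟨y', _, he⟩ := hclsub hz1
      exact nomatch he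
    | none, some x =>
      obtain ⟨s, hs, Ws, hw1, hw2, hwdisj⟩ := key x
      obtain ⟨s', hs'F, hs'o, hs's⟩ := hF.2 s hs
      have hWsub : ∀ i < m + 1, closure (Ws i) ⊆ closure (Ws m) := fun i hi =>
        closure_mono (chain_mono hw2 (by omega) (by omega))
      set Us : ℕ → Set (Option X) :=
        fun i => insert none (some '' (closure (Ws (m - i)))ᶜ) with hUs
      have hUopen : ∀ i < m + 1, IsOpen (Us i) ∧ none ∈ Us i := by
        intro i hi
        constructor
        · rw [isOpen_iff]
          constructor
          · have : (some ⁻¹' Us i : Set X) = (closure (Ws (m - i)))ᶜ := by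
              ext y; simp [hUs, Option.some_injective X |>.eq_iff]
            rw [this]
            exact isClosed_closure.isOpen_compl
          · intro _
            refine ⟨s', hs'F, hs'o, fun y hy => Or.inr ⟨y, ?_, rfl⟩⟩
            intro hyc
            have : y ∈ closure (Ws m) := hWsub (m - i) (by omega) hyc
            exact eq_empty_iff_forall_notMem.mp hwdisj y ⟨this, hs's hy⟩
        · exact mem_insert _ _
      have hUchain : ∀ i, i + 1 < m + 1 → closure (Us i) ⊆ Us (i + 1) := by
        intro i hi
        have step1 : closure (Us i) ⊆
            insert none (some '' closure ((closure (Ws (m - i)))ᶜ)) := by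
          refine (closure_insert_none _).trans ?_
          intro z hz
          rcases hz with h | h
          · exact Or.inl h
          · exact closure_image_subset _ h
        refine step1.trans ?_
        rintro z (h | ⟨y, hy, rfl⟩)
        · exact Or.inl h
        · refine Or.inr ⟨y, ?_, rfl⟩
          intro hyc
          have hsub : closure (Ws (m - (i + 1))) ⊆ Ws (m - i) := by
            have : m - (i + 1) + 1 = m - i := by omega
            exact this ▸ hw2 (m - (i + 1)) (by omega)
          have hopen : IsOpen (Ws (m - i)) := (hw1 (m - i) (by omega)).1
          have hdisj2 : Ws (m - i) ∩ (closure (Ws (m - i)))ᶜ = ∅ := by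
            rw [eq_empty_iff_forall_notMem]
            rintro w ⟨hw, hwc⟩
            exact hwc (subset_closure hw)
          have : Ws (m - i) ∩ closure ((closure (Ws (m - i)))ᶜ) ⊆ ∅ := by
            refine (hopen.inter_closure).trans ?_
            rw [hdisj2, closure_empty]
          exact this ⟨hsub hyc, hy⟩
      refine ⟨Us m, ⟨Us, fun i hi => ⟨(hUopen i hi).1, (hUopen i hi).2⟩, hUchain, rfl⟩, ?_⟩
      rw [eq_empty_iff_forall_notMem]
      rintro z ⟨hz1, hz2⟩
      rw [mem_singleton_iff] at hz2
      subst hz2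
      have hx0 : x ∈ closure ((closure (Ws (m - m)))ᶜ) := by
        rcases mem_insert_iff.mp (closure_insert_none _ hz1) with h | h
        · exact nomatch h
        · rcases mem_insert_iff.mp (closure_image_subset _ h) with h' | h'
          · exact nomatch h'
          · obtain ⟨y, hy, he⟩ := h'
            exact (Option.some_injective X he) ▸ hy
      rw [Nat.sub_self] at hx0
      have hdisj0 : Ws 0 ∩ (closure (Ws 0))ᶜ = ∅ := by
        rw [eq_empty_iff_forall_notMem]
        rintro w ⟨hw, hwc⟩
        exact hwc (subset_closure hw)
      have hsub0 : Ws 0 ∩ closure ((closure (Ws 0))ᶜ) ⊆ ∅ := by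
        refine ((hw1 0 (by omega)).1.inter_closure).trans ?_
        rw [hdisj0, closure_empty]
      exact hsub0 ⟨(hw1 0 (by omega)).2, hx0⟩
    | none, none => exact absurd rfl hne
  -- conclude: the range of `some` is closed, hence `{none}` is open, contradiction
  have hclosed := h4 (Option X) hSnZ some hemb
  have hopen_none : IsOpen ({none} : Set (Option X)) := by
    have hrange : (Set.range (some : X → Option X))ᶜ = {none} := by
      ext z
      cases z <;> simp
    rw [← hrange]
    exact hclosed.isOpen_compl
  obtain ⟨-, h⟩ := (isOpen_iff _).mp hopen_none
  obtain ⟨s, hsF, -, hs⟩ := h rfl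
  have hsempty : s = ∅ := by
    rw [eq_empty_iff_forall_notMem]
    intro y hy
    exact nomatch (mem_singleton_iff.mp (hs y hy))
  exact (Filter.empty_notMem F) (hsempty ▸ hsF)


end PVAux

/-- Porter–Votaw characterization of `S(n)`-closedness. -/
theorem porter_votaw_characterization (n : ℕ) (hn : 1 ≤ n)
    (X : Type u) [TopologicalSpace X] (hX : IsSnSpace n X) :
    [∀ F : Filter X, IsOpenFilter F → (adTheta n F).Nonempty,
     ∀ G : Filter X, IsOpenFilter G → IsSnFilter n G → (adTheta 0 G).Nonempty,
     ∀ C : Set (Set X), IsSnCover (n - 1) C →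
        ∃ t : Finset (Set X), ↑t ⊆ C ∧ ∀ x : X, ∃ U ∈ t, x ∈ closure U,
     IsSnClosedSpace n X].TFAE := by
  obtain ⟨m, rfl⟩ : ∃ m, n = m + 1 := ⟨n - 1, by omega⟩
  have hsub : m + 1 - 1 = m := rfl
  tfae_have 1 → 2 := by
    intro h1 G hG hSn
    obtain ⟨x, hx⟩ := h1 G hG
    refine ⟨x, ?_⟩
    by_contra hx0
    obtain ⟨s, hsG, hxs⟩ := hSn x hx0
    simp only [adTheta, mem_iInter] at hx
    exact hxs (hx s hsG)
  tfae_have 2 → 4 := by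
    intro h2 Z _ hZ e hemb
    by_contra hnc
    have hzex : ∃ z, z ∈ closure (Set.range e) ∧ z ∉ Set.range e := by
      by_contra h
      push_neg at h
      exact hnc (closure_subset_iff_isClosed.mp h)
    obtain ⟨z, hzc, hzr⟩ := hzex
    set G := Filter.comap e (𝓝 z) with hGdef
    haveI hGne : G.NeBot := by
      rw [hGdef, Filter.comap_neBot_iff]
      intro t ht
      obtain ⟨w, hw1, hw2⟩ := mem_closure_iff_nhds.mp hzc t ht
      obtain ⟨a, rfl⟩ := hw2
      exact ⟨a, hw1⟩
    have hGopen : IsOpenFilter G := by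
      refine ⟨hGne, fun s hs => ?_⟩
      obtain ⟨t, ht, hts⟩ := Filter.mem_comap.mp hs
      obtain ⟨V, hVt, hVo, hzV⟩ := mem_nhds_iff.mp ht
      exact ⟨e ⁻¹' V, Filter.preimage_mem_comap (hVo.mem_nhds hzV),
        hVo.preimage hemb.continuous, (preimage_mono hVt).trans hts⟩
    have sep : ∀ x : X, ∃ s ∈ G, x ∉ thetaCl (m + 1) s := by
      intro x
      have hne : e x ≠ z := fun h => hzr (h ▸ mem_range_self x)
      obtain ⟨W, ⟨Vs, hv1, hv2, hv3⟩, hWz⟩ := not_mem_thetaCl_succ.mp (hZ (e x) z hne)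
      have hv3' : Vs m = W := hv3
      have hzW : z ∉ closure W := fun h => eq_empty_iff_forall_notMem.mp hWz z ⟨h, rfl⟩
      refine ⟨e ⁻¹' (closure W)ᶜ,
        Filter.preimage_mem_comap (isClosed_closure.isOpen_compl.mem_nhds hzW), ?_⟩
      rw [not_mem_thetaCl_succ]
      refine ⟨e ⁻¹' W, ⟨fun i => e ⁻¹' Vs i, ?_, ?_, by show e ⁻¹' Vs m = e ⁻¹' W; rw [hv3']⟩, ?_⟩
      · intro i hi
        exact ⟨(hv1 i hi).1.preimage hemb.continuous, (hv1 i hi).2⟩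
      · intro i hi
        exact (hemb.continuous.closure_preimage_subset _).trans (preimage_mono (hv2 i hi))
      · rw [eq_empty_iff_forall_notMem]
        rintro y ⟨hy1, hy2⟩
        exact hy2 ((hemb.continuous.closure_preimage_subset _) hy1)
    have hGSn : IsSnFilter (m + 1) G := fun x _ => sep x
    obtain ⟨y, hy⟩ := h2 G hGopen hGSn
    obtain ⟨s, hsG, hys⟩ := sep y
    simp only [adTheta, mem_iInter] at hy
    exact hys (closure_subset_thetaCl (m + 1) s (hy s hsG))
  tfae_have 4 → 1 := fun h4 F hF => adTheta_nonempty_of_isSnClosed hX h4 F hF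
  tfae_have 1 → 3 := by
    intro h1 C hC
    classical
    by_contra hno
    push_neg at hno
    set S := {V | ∃ U ∈ C, V = (closure U)ᶜ} with hSdef
    set F := Filter.generate S with hFdef
    have hgen_mem : ∀ U ∈ C, (closure U)ᶜ ∈ F := fun U hU =>
      Filter.mem_generate_iff.mpr ⟨{(closure U)ᶜ}, by
        rw [singleton_subset_iff]; exact ⟨U, hU, rfl⟩, finite_singleton _, by simp⟩
    have hu : ∀ V ∈ S, ∃ W, W ∈ C ∧ V = (closure W)ᶜ := fun V hV => by
      obtain ⟨W, hW, he⟩ := hV; exact ⟨W, hW, he⟩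
    choose! u huC hueq using hu
    have hFne : F.NeBot := by
      constructor
      intro hbot
      have hempty : (∅ : Set X) ∈ F := by rw [hbot]; exact Filter.mem_bot
      obtain ⟨t, htS, htfin, htsub⟩ := Filter.mem_generate_iff.mp hempty
      set t' : Finset (Set X) := htfin.toFinset.image u with ht'def
      have ht'C : ↑t' ⊆ C := by
        intro W hW
        simp only [ht'def, Finset.coe_image, Set.Finite.coe_toFinset] at hW
        obtain ⟨V, hV, rfl⟩ := hW
        exact huC V (htS hV)
      obtain ⟨x, hx⟩ := hno t' ht'C
      have hxt : ¬ ∀ V ∈ t, x ∈ V := by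
        intro h
        exact absurd (htsub (mem_sInter.mpr h)) (notMem_empty x)
      push_neg at hxt
      obtain ⟨V, hVt, hxV⟩ := hxt
      rw [hueq V (htS hVt)] at hxV
      have hxcl : x ∈ closure (u V) := by simpa using hxV
      have hmem : u V ∈ t' := by
        rw [ht'def]
        exact Finset.mem_image.mpr ⟨V, htfin.mem_toFinset.mpr hVt, rfl⟩
      exact hx (u V) hmem hxcl
    have hFopen : IsOpenFilter F := by
      refine ⟨hFne, fun s hs => ?_⟩
      obtain ⟨t, htS, htfin, htsub⟩ := Filter.mem_generate_iff.mp hs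
      refine ⟨⋂₀ t, Filter.mem_generate_iff.mpr ⟨t, htS, htfin, subset_rfl⟩, ?_, htsub⟩
      refine htfin.isOpen_sInter fun V hV => ?_
      rw [hueq V (htS hV)]
      exact isClosed_closure.isOpen_compl
    obtain ⟨x, hx⟩ := h1 F hFopen
    obtain ⟨U, hUC, hxInt⟩ := hC.2.2 x
    obtain ⟨Us, hu1, hu2, hu3⟩ := hull_of_thetaInt (hC.1 U hUC) hxInt
    have hxcl : x ∈ thetaCl (m + 1) ((closure U)ᶜ) := by
      simp only [adTheta, mem_iInter] at hx
      exact hx _ (hgen_mem U hUC)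
    obtain ⟨w, hw1, hw2⟩ := hxcl U ⟨Us, hu1, hu2, hu3⟩
    exact hw2 hw1
  tfae_have 3 → 1 := by
    intro h3 F hF
    haveI := hF.1
    by_contra hemp
    rw [Set.not_nonempty_iff_eq_empty] at hemp
    have key : ∀ x : X, ∃ s, s ∈ F ∧ ∃ U, IsNHull (m + 1) x U ∧ closure U ∩ s = ∅ := by
      intro x
      have hx : x ∉ adTheta (m + 1) F := by rw [hemp]; exact notMem_empty x
      simp only [adTheta, mem_iInter, not_forall] at hx
      obtain ⟨s, hs, hxs⟩ := hx
      obtain ⟨U, hU, hcl⟩ := not_mem_thetaCl_succ.mp hxs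
      exact ⟨s, hs, U, hU, hcl⟩
    choose s hsF U hUhull hUdisj using key
    set C := Set.range U with hCdef
    have hCopen : ∀ V ∈ C, IsOpen V := by
      rintro _ ⟨x, rfl⟩
      obtain ⟨Us, h1, h2, h3⟩ := hUhull x
      have h3' : Us m = U x := h3
      exact h3' ▸ (h1 m (by omega)).1
    have hCmem : ∀ x : X, x ∈ U x := by
      intro x
      obtain ⟨Us, h1, h2, h3⟩ := hUhull x
      have h3' : Us m = U x := h3
      exact h3' ▸ (h1 m (by omega)).2
    have hCcover : IsSnCover m C := by
      refine ⟨hCopen, ?_, ?_⟩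
      · apply eq_univ_of_forall
        intro x
        exact ⟨U x, mem_range_self x, hCmem x⟩
      · intro x
        obtain ⟨Us, h1, h2, h3⟩ := hUhull x
        exact ⟨U x, mem_range_self x, thetaInt_of_hull Us h1 h2 h3⟩
    obtain ⟨t, htC, hcov⟩ := h3 C hCcover
    have hpex : ∀ V ∈ (↑t : Set (Set X)), ∃ x, U x = V := fun V hV => htC hV
    obtain ⟨x0, -⟩ := Filter.nonempty_of_mem (univ_mem (f := F))
    haveI : Nonempty X := ⟨x0⟩
    choose! p hp using hpex
    have hsmem : (⋂ V ∈ t, s (p V)) ∈ F := (Filter.biInter_finset_mem t).mpr fun V _ => hsF (p V)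
    obtain ⟨y, hy⟩ := Filter.nonempty_of_mem hsmem
    obtain ⟨V, hVt, hyV⟩ := hcov y
    have hys : y ∈ s (p V) := by
      simp only [mem_iInter] at hy
      exact hy V hVt
    have hycl : y ∈ closure (U (p V)) := by rw [hp V hVt]; exact hyV
    exact eq_empty_iff_forall_notMem.mp (hUdisj (p V)) y ⟨hycl, hys⟩
  tfae_finish
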